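/- Let S and A be nonempty finite sets, T ≥ 0, p₀ a strictly positive PMF on S, P(·|s,a) a strictly positive PMF on S for each (s,a), r : S × A → ℝ, and fix strictly positive policies π_0,…,π_{T−1} (each π_t(·|s) a PMF on A). For a trajectory τ = (s⁰,a⁰,…,s^T,a^T,s^{T+1}), let p̂(τ) = p₀(s⁰)·Π_{t=0}^{T} P(s^{t+1}|s^t,a^t)·Π_{t=0}^{T} π_t(a^t|s^t) and p(τ) = (1/Z)·p₀(s⁰)·Π_{t=0}^{T} P(s^{t+1}|s^t,a^t)·exp(Σ_{t=0}^{T} r(s^t,a^t)) with Z the normalizing constant. Then, viewing KL(p̂ ‖ p) as a function of the time-T policy π_T with π_0,…,π_{T−1} fixed, it is minimized over all choices of π_T (assigning to each state a PMF on A) exactly when π_T(a|s) = exp(r(s,a)) / Σ_{a'∈A} exp(r(s,a')) for every s ∈ S. -/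

import Mathlib

/-- Kullback–Leibler divergence between finitely supported distributions,
with the convention `0 · log 0 = 0`. -/
noncomputable def KLdiv {X : Type*} [Fintype X] (p q : X → ℝ) : ℝ :=
  ∑ x, p x * Real.log (p x / q x)

/-- The trajectory distribution `p̂` induced by the initial distribution `p0`,
transition kernel `P` and time-dependent policy `pol`. -/
noncomputable def trajHat {S A : Type*} [Fintype S] [Fintype A] (T : ℕ)
    (p0 : S → ℝ) (P : S → A → S → ℝ) (pol : Fin (T + 1) → S → A → ℝ) :
    (Fin (T + 2) → S) × (Fin (T + 1) → A) → ℝ :=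
  fun τ => p0 (τ.1 0) * ∏ t : Fin (T + 1),
    (P (τ.1 t.castSucc) (τ.2 t) (τ.1 t.succ) * pol t (τ.1 t.castSucc) (τ.2 t))

/-- The unnormalized optimal trajectory weight
`p0(s⁰) · ∏_t P(s^{t+1}|s^t,a^t) · exp(∑_t r(s^t,a^t))`. -/
noncomputable def trajOptW {S A : Type*} [Fintype S] [Fintype A] (T : ℕ)
    (p0 : S → ℝ) (P : S → A → S → ℝ) (r : S → A → ℝ) :
    (Fin (T + 2) → S) × (Fin (T + 1) → A) → ℝ :=
  fun τ => p0 (τ.1 0) * (∏ t : Fin (T + 1), P (τ.1 t.castSucc) (τ.2 t) (τ.1 t.succ)) *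
    Real.exp (∑ t : Fin (T + 1), r (τ.1 t.castSucc) (τ.2 t))

/-- The policy equal to `polInit t` for `t < T` and to `πT` at the final step `t = T`. -/
def fullPol {S A : Type*} (T : ℕ) (polInit : Fin T → S → A → ℝ)
    (πT : S → A → ℝ) : Fin (T + 1) → S → A → ℝ :=
  fun t => if h : (t : ℕ) < T then polInit ⟨(t : ℕ), h⟩ else πT

/-!
Split a trajectory into its prefix `(s⁰, a⁰, …, s^T)` and its last step `(a^T, s^{T+1})`.
For the softmax policy `π*`, the ratio `p̂_{π*}(τ) / p(τ)` depends on the prefix only, and the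
law of the prefix does not depend on the final policy. Hence
`KL(p̂_π ‖ p) = KL(p̂_π ‖ p̂_{π*}) + C` with `C` independent of `π`, so Gibbs' inequality gives
minimality, and equality forces `p̂_π = p̂_{π*}`, i.e. `π = π*` since every prefix has positive
weight.
-/

open Finset Real InformationTheory

section KLdiv

variable {X : Type*} [Fintype X]

theorem KLdiv_self (p : X → ℝ) : KLdiv p p = 0 := by
  simp [KLdiv]

theorem KLdiv_eq_sum_mul_klFun {p q : X → ℝ} (hq : ∀ x, q x ≠ 0)
    (hsum : ∑ x, p x = ∑ x, q x) : KLdiv p q = ∑ x, q x * klFun (p x / q x) := by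
  have hterm : ∀ x, q x * klFun (p x / q x) = p x * log (p x / q x) + q x - p x := by
    intro x
    have hqx := hq x
    rw [klFun_apply]
    field_simp
  simp only [hterm, sum_sub_distrib, sum_add_distrib, hsum, KLdiv, add_sub_cancel_right]

theorem KLdiv_nonneg {p q : X → ℝ} (hp : ∀ x, 0 ≤ p x) (hq : ∀ x, 0 < q x)
    (hsum : ∑ x, p x = ∑ x, q x) : 0 ≤ KLdiv p q := by
  rw [KLdiv_eq_sum_mul_klFun (fun x => (hq x).ne') hsum]
  exact sum_nonneg fun x _ =>
    mul_nonneg (hq x).le (klFun_nonneg (div_nonneg (hp x) (hq x).le))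

theorem eq_of_KLdiv_eq_zero {p q : X → ℝ} (hp : ∀ x, 0 ≤ p x) (hq : ∀ x, 0 < q x)
    (hsum : ∑ x, p x = ∑ x, q x) (h : KLdiv p q = 0) : p = q := by
  have hratio : ∀ x, 0 ≤ p x / q x := fun x => div_nonneg (hp x) (hq x).le
  rw [KLdiv_eq_sum_mul_klFun (fun x => (hq x).ne') hsum,
    sum_eq_zero_iff_of_nonneg fun x _ => mul_nonneg (hq x).le (klFun_nonneg (hratio x))] at h
  funext x
  have hklFun := (mul_eq_zero.mp (h x (mem_univ x))).resolve_left (hq x).ne'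
  rwa [klFun_eq_zero_iff (hratio x), div_eq_one_iff_eq (hq x).ne'] at hklFun

theorem KLdiv_eq_KLdiv_add_sum_mul_log (p : X → ℝ) {q m : X → ℝ} (hq : ∀ x, q x ≠ 0)
    (hm : ∀ x, m x ≠ 0) : KLdiv p q = KLdiv p m + ∑ x, p x * log (m x / q x) := by
  rw [KLdiv, KLdiv, ← sum_add_distrib]
  refine sum_congr rfl fun x _ => ?_
  rcases eq_or_ne (p x) 0 with hp | hp
  · simp [hp]
  · rw [← mul_add, ← log_mul (div_ne_zero hp (hm x)) (div_ne_zero (hm x) (hq x)),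
      div_mul_div_cancel₀ (hm x)]

end KLdiv

section Trajectory

variable {S A : Type*} {T : ℕ} {p0 : S → ℝ} {P : S → A → S → ℝ} {polInit : Fin T → S → A → ℝ}

/-- `trajHat` and `trajOptW` restricted to the prefix `(s⁰, a⁰, …, a^{T-1}, s^T)`. -/
noncomputable def prefixHat (T : ℕ) (p0 : S → ℝ) (P : S → A → S → ℝ)
    (polInit : Fin T → S → A → ℝ) (σ : Fin (T + 1) → S) (α : Fin T → A) : ℝ :=
  p0 (σ 0) * ∏ t : Fin T, (P (σ t.castSucc) (α t) (σ t.succ) * polInit t (σ t.castSucc) (α t))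

noncomputable def prefixOptW (T : ℕ) (p0 : S → ℝ) (P : S → A → S → ℝ) (r : S → A → ℝ)
    (σ : Fin (T + 1) → S) (α : Fin T → A) : ℝ :=
  p0 (σ 0) * (∏ t : Fin T, P (σ t.castSucc) (α t) (σ t.succ)) *
    exp (∑ t : Fin T, r (σ t.castSucc) (α t))

noncomputable def softmaxPolicy [Fintype A] (r : S → A → ℝ) (s : S) (a : A) : ℝ :=
  exp (r s a) / ∑ a', exp (r s a')

theorem softmaxPolicy_pos [Fintype A] [Nonempty A] (r : S → A → ℝ) (s : S) (a : A) :
    0 < softmaxPolicy r s a :=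
  div_pos (exp_pos _) (sum_pos (fun _ _ => exp_pos _) univ_nonempty)

theorem sum_softmaxPolicy [Fintype A] [Nonempty A] (r : S → A → ℝ) (s : S) :
    ∑ a, softmaxPolicy r s a = 1 := by
  simp only [softmaxPolicy]
  rw [← sum_div, div_self (sum_pos (fun _ _ => exp_pos _) univ_nonempty).ne']

theorem fullPol_castSucc (πT : S → A → ℝ) (t : Fin T) :
    fullPol T polInit πT t.castSucc = polInit t := by
  simp [fullPol]

theorem fullPol_last (πT : S → A → ℝ) : fullPol T polInit πT (Fin.last T) = πT := by
  simp [fullPol]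

theorem fullPol_nonneg (hpol : ∀ t s a, 0 ≤ polInit t s a) {πT : S → A → ℝ}
    (hπT : ∀ s a, 0 ≤ πT s a) (t : Fin (T + 1)) (s : S) (a : A) :
    0 ≤ fullPol T polInit πT t s a := by
  unfold fullPol
  split <;> simp only [hpol, hπT]

theorem fullPol_pos (hpol : ∀ t s a, 0 < polInit t s a) {πT : S → A → ℝ}
    (hπT : ∀ s a, 0 < πT s a) (t : Fin (T + 1)) (s : S) (a : A) :
    0 < fullPol T polInit πT t s a := by
  unfold fullPol
  split <;> simp only [hpol, hπT]

theorem prefixHat_pos (hp0 : ∀ s, 0 < p0 s) (hP : ∀ s a s', 0 < P s a s')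
    (hpol : ∀ t s a, 0 < polInit t s a) (σ : Fin (T + 1) → S) (α : Fin T → A) :
    0 < prefixHat T p0 P polInit σ α :=
  mul_pos (hp0 _) (prod_pos fun _ _ => mul_pos (hP _ _ _) (hpol _ _ _))

variable [Fintype S] [Fintype A]

theorem trajHat_nonneg {pol : Fin (T + 1) → S → A → ℝ} (hp0 : ∀ s, 0 ≤ p0 s)
    (hP : ∀ s a s', 0 ≤ P s a s') (hpol : ∀ t s a, 0 ≤ pol t s a)
    (τ : (Fin (T + 2) → S) × (Fin (T + 1) → A)) : 0 ≤ trajHat T p0 P pol τ :=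
  mul_nonneg (hp0 _) (prod_nonneg fun _ _ => mul_nonneg (hP _ _ _) (hpol _ _ _))

theorem trajHat_pos {pol : Fin (T + 1) → S → A → ℝ} (hp0 : ∀ s, 0 < p0 s)
    (hP : ∀ s a s', 0 < P s a s') (hpol : ∀ t s a, 0 < pol t s a)
    (τ : (Fin (T + 2) → S) × (Fin (T + 1) → A)) : 0 < trajHat T p0 P pol τ :=
  mul_pos (hp0 _) (prod_pos fun _ _ => mul_pos (hP _ _ _) (hpol _ _ _))

theorem trajOptW_pos (hp0 : ∀ s, 0 < p0 s) (hP : ∀ s a s', 0 < P s a s') (r : S → A → ℝ)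
    (τ : (Fin (T + 2) → S) × (Fin (T + 1) → A)) : 0 < trajOptW T p0 P r τ :=
  mul_pos (mul_pos (hp0 _) (prod_pos fun _ _ => hP _ _ _)) (exp_pos _)

theorem trajHat_fullPol_snoc (πT : S → A → ℝ) (σ : Fin (T + 1) → S) (s' : S) (α : Fin T → A)
    (a : A) :
    trajHat T p0 P (fullPol T polInit πT) (Fin.snoc σ s', Fin.snoc α a) =
      prefixHat T p0 P polInit σ α * (P (σ (Fin.last T)) a s' * πT (σ (Fin.last T)) a) := by
  rw [trajHat, prefixHat, Fin.prod_univ_castSucc, ← Fin.castSucc_zero, mul_assoc]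
  simp only [Fin.snoc_castSucc, Fin.snoc_last, Fin.succ_castSucc, Fin.succ_last,
    fullPol_castSucc, fullPol_last]

theorem trajOptW_snoc (r : S → A → ℝ) (σ : Fin (T + 1) → S) (s' : S) (α : Fin T → A) (a : A) :
    trajOptW T p0 P r (Fin.snoc σ s', Fin.snoc α a) =
      prefixOptW T p0 P r σ α * (P (σ (Fin.last T)) a s' * exp (r (σ (Fin.last T)) a)) := by
  rw [trajOptW, prefixOptW, Fin.prod_univ_castSucc, Fin.sum_univ_castSucc, exp_add,
    ← Fin.castSucc_zero]
  simp only [Fin.snoc_castSucc, Fin.snoc_last, Fin.succ_castSucc, Fin.succ_last]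
  ring

theorem sum_pi_fin_succ_eq_sum_snoc {M : Type*} [AddCommMonoid M] {n : ℕ}
    (f : (Fin (n + 1) → S) → M) : ∑ σ, f σ = ∑ σ, ∑ s, f (Fin.snoc σ s) := by
  rw [← (Fin.snocEquiv fun _ => S).sum_comp, Fintype.sum_prod_type, sum_comm]
  rfl

theorem sum_traj_eq_sum_snoc {M : Type*} [AddCommMonoid M] {m n : ℕ}
    (f : (Fin (m + 1) → S) × (Fin (n + 1) → A) → M) :
    ∑ τ, f τ = ∑ σ, ∑ α, ∑ a, ∑ s', f (Fin.snoc σ s', Fin.snoc α a) := by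
  simp only [Fintype.sum_prod_type, sum_pi_fin_succ_eq_sum_snoc (S := S),
    sum_pi_fin_succ_eq_sum_snoc (S := A)]
  refine sum_congr rfl fun σ _ => ?_
  rw [sum_comm]
  exact sum_congr rfl fun α _ => sum_comm

end Trajectory

section Decomposition

variable {S A : Type*} [Fintype S] [Fintype A] {T : ℕ} {p0 : S → ℝ} {P : S → A → S → ℝ}
  {polInit : Fin T → S → A → ℝ}

theorem sum_trajHat_fullPol_mul_prefix (hPsum : ∀ s a, ∑ s', P s a s' = 1)
    {πT : S → A → ℝ} (hπT : ∀ s, ∑ a, πT s a = 1) (g : (Fin (T + 1) → S) → (Fin T → A) → ℝ) :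
    ∑ τ, trajHat T p0 P (fullPol T polInit πT) τ * g (Fin.init τ.1) (Fin.init τ.2) =
      ∑ σ, ∑ α, prefixHat T p0 P polInit σ α * g σ α := by
  rw [sum_traj_eq_sum_snoc]
  refine sum_congr rfl fun σ _ => sum_congr rfl fun α _ => ?_
  simp only [trajHat_fullPol_snoc, Fin.init_snoc, mul_assoc, mul_comm (P _ _ _), ← mul_sum,
    hPsum, mul_one, mul_left_comm (πT _ _), hπT]

theorem sum_trajHat_fullPol (hPsum : ∀ s a, ∑ s', P s a s' = 1) {πT : S → A → ℝ}
    (hπT : ∀ s, ∑ a, πT s a = 1) :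
    ∑ τ, trajHat T p0 P (fullPol T polInit πT) τ = ∑ σ, ∑ α, prefixHat T p0 P polInit σ α := by
  simpa using sum_trajHat_fullPol_mul_prefix (p0 := p0) hPsum hπT fun _ _ => 1

theorem trajHat_softmax_div_trajOptW (hP : ∀ s a s', P s a s' ≠ 0) (r : S → A → ℝ)
    (τ : (Fin (T + 2) → S) × (Fin (T + 1) → A)) :
    trajHat T p0 P (fullPol T polInit (softmaxPolicy r)) τ / trajOptW T p0 P r τ =
      prefixHat T p0 P polInit (Fin.init τ.1) (Fin.init τ.2) /
        (prefixOptW T p0 P r (Fin.init τ.1) (Fin.init τ.2) *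
          ∑ a, exp (r (Fin.init τ.1 (Fin.last T)) a)) := by
  obtain ⟨σ, α⟩ := τ
  rw [← Fin.snoc_init_self σ, ← Fin.snoc_init_self α, trajHat_fullPol_snoc, trajOptW_snoc]
  simp only [Fin.init_snoc, softmaxPolicy]
  have hPσα := hP (Fin.init σ (Fin.last T)) (α (Fin.last T)) (σ (Fin.last (T + 1)))
  field_simp

theorem exists_KLdiv_trajOpt_eq_KLdiv_softmax_add [Nonempty S] [Nonempty A]
    (hp0 : ∀ s, 0 < p0 s) (hP : ∀ s a s', 0 < P s a s') (hPsum : ∀ s a, ∑ s', P s a s' = 1)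
    (hpol : ∀ t s a, 0 < polInit t s a) (r : S → A → ℝ) :
    ∃ C, ∀ πT : S → A → ℝ, (∀ s, ∑ a, πT s a = 1) →
      KLdiv (trajHat T p0 P (fullPol T polInit πT))
          (fun τ => trajOptW T p0 P r τ / ∑ τ', trajOptW T p0 P r τ') =
        KLdiv (trajHat T p0 P (fullPol T polInit πT))
          (trajHat T p0 P (fullPol T polInit (softmaxPolicy r))) + C := by
  set Z := ∑ τ', trajOptW T p0 P r τ'
  have hZ : 0 < Z := sum_pos (fun τ _ => trajOptW_pos hp0 hP r τ) univ_nonempty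
  set g : (Fin (T + 1) → S) → (Fin T → A) → ℝ := fun σ α =>
    log (prefixHat T p0 P polInit σ α /
      (prefixOptW T p0 P r σ α * ∑ a, exp (r (σ (Fin.last T)) a)) * Z)
  refine ⟨∑ σ, ∑ α, prefixHat T p0 P polInit σ α * g σ α, fun πT hπT => ?_⟩
  rw [KLdiv_eq_KLdiv_add_sum_mul_log _ (fun τ => (div_pos (trajOptW_pos hp0 hP r τ) hZ).ne')
      (fun τ => (trajHat_pos hp0 hP (fullPol_pos hpol (softmaxPolicy_pos r)) τ).ne'),
    ← sum_trajHat_fullPol_mul_prefix hPsum hπT]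
  refine congrArg _ (sum_congr rfl fun τ _ => ?_)
  rw [div_div_eq_mul_div, mul_div_right_comm,
    trajHat_softmax_div_trajOptW (fun s a s' => (hP s a s').ne')]

theorem eq_of_trajHat_fullPol_eq (hp0 : ∀ s, 0 < p0 s) (hP : ∀ s a s', 0 < P s a s')
    (hpol : ∀ t s a, 0 < polInit t s a) {πT πT' : S → A → ℝ}
    (h : trajHat T p0 P (fullPol T polInit πT) = trajHat T p0 P (fullPol T polInit πT')) :
    πT = πT' := by
  funext s a
  have hsa := congrFun h (Fin.snoc (fun _ => s) s, Fin.snoc (fun _ => a) a)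
  rw [trajHat_fullPol_snoc, trajHat_fullPol_snoc] at hsa
  exact mul_left_cancel₀ (hP s a s).ne'
    (mul_left_cancel₀ (prefixHat_pos hp0 hP hpol _ _).ne' hsa)

end Decomposition

theorem final_step_optimal_policy_is_softmax_general {S A : Type*} [Fintype S] [Fintype A]
    [Nonempty S] [Nonempty A] (T : ℕ)
    (p0 : S → ℝ) (hp0 : ∀ s, 0 < p0 s)
    (P : S → A → S → ℝ) (hP : ∀ s a s', 0 < P s a s')
    (hPsum : ∀ s a, ∑ s', P s a s' = 1)
    (r : S → A → ℝ)
    (polInit : Fin T → S → A → ℝ) (hpol : ∀ t s a, 0 < polInit t s a) :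
    ∀ πT : S → A → ℝ, (∀ s a, 0 ≤ πT s a) → (∀ s, ∑ a, πT s a = 1) →
      (KLdiv
          (trajHat T p0 P (fullPol T polInit
            (fun s a => Real.exp (r s a) / ∑ a', Real.exp (r s a'))))
          (fun τ => trajOptW T p0 P r τ / ∑ τ', trajOptW T p0 P r τ') ≤
        KLdiv (trajHat T p0 P (fullPol T polInit πT))
          (fun τ => trajOptW T p0 P r τ / ∑ τ', trajOptW T p0 P r τ')) ∧
      (KLdiv (trajHat T p0 P (fullPol T polInit πT))
          (fun τ => trajOptW T p0 P r τ / ∑ τ', trajOptW T p0 P r τ') =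
        KLdiv
          (trajHat T p0 P (fullPol T polInit
            (fun s a => Real.exp (r s a) / ∑ a', Real.exp (r s a'))))
          (fun τ => trajOptW T p0 P r τ / ∑ τ', trajOptW T p0 P r τ') →
        πT = fun s a => Real.exp (r s a) / ∑ a', Real.exp (r s a')) := by
  intro πT hπT hπTsum
  rw [show (fun s a => exp (r s a) / ∑ a', exp (r s a')) = softmaxPolicy r from rfl]
  obtain ⟨C, hC⟩ := exists_KLdiv_trajOpt_eq_KLdiv_softmax_add hp0 hP hPsum hpol r
  have hstar_pos := trajHat_pos hp0 hP (fullPol_pos hpol (softmaxPolicy_pos r))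
  have hπT_nonneg := trajHat_nonneg (fun s => (hp0 s).le) (fun s a s' => (hP s a s').le)
    (fullPol_nonneg (fun t s a => (hpol t s a).le) hπT)
  have hmass : ∑ τ, trajHat T p0 P (fullPol T polInit πT) τ =
      ∑ τ, trajHat T p0 P (fullPol T polInit (softmaxPolicy r)) τ := by
    rw [sum_trajHat_fullPol hPsum hπTsum, sum_trajHat_fullPol hPsum (sum_softmaxPolicy r)]
  rw [hC πT hπTsum, hC _ (sum_softmaxPolicy r), KLdiv_self, zero_add]
  refine ⟨le_add_of_nonneg_left (KLdiv_nonneg hπT_nonneg hstar_pos hmass), fun h => ?_⟩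
  exact eq_of_trajHat_fullPol_eq hp0 hP hpol
    (eq_of_KLdiv_eq_zero hπT_nonneg hstar_pos hmass (by linarith))

/-- With the policies `π_0,…,π_{T−1}` fixed (strictly positive),
the trajectory KL divergence `KL(p̂ ‖ p)`, viewed as a function of the time-`T`
policy, is minimized over all state-wise PMFs exactly at the softmax policy
`π_T(a|s) = exp(r(s,a)) / ∑_{a'} exp(r(s,a'))`. -/
theorem final_step_optimal_policy_is_softmax {S A : Type*} [Fintype S] [Fintype A]
    [Nonempty S] [Nonempty A] (T : ℕ)
    (p0 : S → ℝ) (hp0 : ∀ s, 0 < p0 s) (hp0sum : ∑ s, p0 s = 1)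
    (P : S → A → S → ℝ) (hP : ∀ s a s', 0 < P s a s')
    (hPsum : ∀ s a, ∑ s', P s a s' = 1)
    (r : S → A → ℝ)
    (polInit : Fin T → S → A → ℝ) (hpol : ∀ t s a, 0 < polInit t s a)
    (hpolsum : ∀ t s, ∑ a, polInit t s a = 1) :
    ∀ πT : S → A → ℝ, (∀ s a, 0 ≤ πT s a) → (∀ s, ∑ a, πT s a = 1) →
      (KLdiv
          (trajHat T p0 P (fullPol T polInit
            (fun s a => Real.exp (r s a) / ∑ a', Real.exp (r s a'))))
          (fun τ => trajOptW T p0 P r τ / ∑ τ', trajOptW T p0 P r τ') ≤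
        KLdiv (trajHat T p0 P (fullPol T polInit πT))
          (fun τ => trajOptW T p0 P r τ / ∑ τ', trajOptW T p0 P r τ')) ∧
      (KLdiv (trajHat T p0 P (fullPol T polInit πT))
          (fun τ => trajOptW T p0 P r τ / ∑ τ', trajOptW T p0 P r τ') =
        KLdiv
          (trajHat T p0 P (fullPol T polInit
            (fun s a => Real.exp (r s a) / ∑ a', Real.exp (r s a'))))
          (fun τ => trajOptW T p0 P r τ / ∑ τ', trajOptW T p0 P r τ') →
        πT = fun s a => Real.exp (r s a) / ∑ a', Real.exp (r s a')) :=
  final_step_optimal_policy_is_softmax_general T p0 hp0 P hP hPsum r polInit hpol
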